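/- Let G be a K_{2,4}-saturated n by n bipartite graph with minimum degree 1. Then G has at least 4n - 3 edges. -/
import Mathlib


open Finset

/-- An `n` by `n` bipartite graph, given by its edge set `E ⊆ U × U'`,
contains a copy of the complete bipartite graph with `a` vertices in `U`
and `b` vertices in `U'`. -/
def ContainsK (n : ℕ) (E : Finset (Fin n × Fin n)) (a b : ℕ) : Prop :=
  ∃ S T : Finset (Fin n), S.card = a ∧ T.card = b ∧ ∀ u ∈ S, ∀ v ∈ T, (u, v) ∈ E

/-- Contains an (unordered) copy of `K_{s,t}`. -/
def ContainsKst (n : ℕ) (E : Finset (Fin n × Fin n)) (s t : ℕ) : Prop :=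
  ContainsK n E s t ∨ ContainsK n E t s

/-- `K_{s,t}`-saturated: `K_{s,t}`-free, but adding any missing edge across
the bipartition creates a copy of `K_{s,t}`. -/
def SaturatedKst (n : ℕ) (E : Finset (Fin n × Fin n)) (s t : ℕ) : Prop :=
  ¬ ContainsKst n E s t ∧
    ∀ u v : Fin n, (u, v) ∉ E → ContainsKst n (insert (u, v) E) s t

/-- Degree of a vertex `u` on the `U` side. -/
def degU (n : ℕ) (E : Finset (Fin n × Fin n)) (u : Fin n) : ℕ :=
  (E.filter (fun p => p.1 = u)).card

/-- Degree of a vertex `v` on the `U'` side. -/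
def degV (n : ℕ) (E : Finset (Fin n × Fin n)) (v : Fin n) : ℕ :=
  (E.filter (fun p => p.2 = v)).card

lemma mainU (n : ℕ) (E : Finset (Fin n × Fin n))
    (hsat : SaturatedKst n E 2 4)
    (hU : ∀ u : Fin n, 1 ≤ degU n E u)
    (u₀ : Fin n) (h1 : degU n E u₀ = 1) : 4 * n - 3 ≤ E.card := by
  obtain ⟨a, ha⟩ := Finset.card_eq_one.mp h1
  have hamem : a ∈ E.filter (fun p => p.1 = u₀) := ha ▸ mem_singleton_self a
  rw [mem_filter] at hamem
  set v₀ := a.2 with hv₀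
  have haeq : a = (u₀, v₀) := Prod.ext hamem.2 rfl
  have hE0 : (u₀, v₀) ∈ E := haeq ▸ hamem.1
  have huniq : ∀ v : Fin n, (u₀, v) ∈ E → v = v₀ := by
    intro v hv
    have : (u₀, v) ∈ E.filter (fun p => p.1 = u₀) := mem_filter.mpr ⟨hv, rfl⟩
    rw [ha, mem_singleton] at this
    exact congrArg Prod.snd this
  have key : ∀ u' : Fin n, u' ≠ v₀ → ∃ s : Finset (Fin n),
      s.card = 3 ∧ ∀ u ∈ s, (u, v₀) ∈ E ∧ (u, u') ∈ E := by
    intro u' hne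
    have hnot : (u₀, u') ∉ E := fun h => hne (huniq u' h)
    rcases hsat.2 u₀ u' hnot with ⟨S, T, hS, hT, hadj⟩ | ⟨S, T, hS, hT, hadj⟩
    · -- K(2,4): impossible
      by_cases hall : ∀ u ∈ S, ∀ v ∈ T, (u, v) ∈ E
      · exact absurd (Or.inl ⟨S, T, hS, hT, hall⟩) hsat.1
      push_neg at hall
      obtain ⟨u, hu, v, hv, hnotE⟩ := hall
      have heq : (u, v) = (u₀, u') :=
        (mem_insert.mp (hadj u hu v hv)).resolve_right hnotE
      have hu0S : u₀ ∈ S := by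
        injection heq with he1 he2
        exact he1 ▸ hu
      have hsub : T ⊆ {v₀, u'} := by
        intro w hw
        rcases mem_insert.mp (hadj u₀ hu0S w hw) with h | h
        · simp only [Prod.mk.injEq] at h
          simp [h.2]
        · simp [huniq w h]
      have := card_le_card hsub
      have h2 : ({v₀, u'} : Finset (Fin n)).card ≤ 2 := card_insert_le _ _ |>.trans (by simp)
      omega
    · -- K(4,2)
      by_cases hall : ∀ u ∈ S, ∀ v ∈ T, (u, v) ∈ E
      · exact absurd (Or.inr ⟨S, T, hS, hT, hall⟩) hsat.1
      push_neg at hall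
      obtain ⟨u, hu, v, hv, hnotE⟩ := hall
      have heq : (u, v) = (u₀, u') :=
        (mem_insert.mp (hadj u hu v hv)).resolve_right hnotE
      have hu0S : u₀ ∈ S := by
        injection heq with he1 he2
        exact he1 ▸ hu
      have hsub : T ⊆ {v₀, u'} := by
        intro w hw
        rcases mem_insert.mp (hadj u₀ hu0S w hw) with h | h
        · simp only [Prod.mk.injEq] at h
          simp [h.2]
        · simp [huniq w h]
      have hcard2 : ({v₀, u'} : Finset (Fin n)).card = 2 := by
        rw [card_insert_of_notMem (by simp [Ne.symm hne]), card_singleton]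
      have hTeq : T = {v₀, u'} :=
        Finset.eq_of_subset_of_card_le hsub (by omega)
      refine ⟨S.erase u₀, ?_, ?_⟩
      · rw [card_erase_of_mem hu0S, hS]
      · intro w hw
        have hwS : w ∈ S := mem_of_mem_erase hw
        have hwne : w ≠ u₀ := ne_of_mem_erase hw
        have h1 : (w, v₀) ∈ insert (u₀, u') E := hadj w hwS v₀ (by rw [hTeq]; simp)
        have h2 : (w, u') ∈ insert (u₀, u') E := hadj w hwS u' (by rw [hTeq]; simp)
        constructor
        · rcases mem_insert.mp h1 with h | h
          · exact absurd (Prod.ext_iff.mp h).1 hwne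
          · exact h
        · rcases mem_insert.mp h2 with h | h
          · exact absurd (Prod.ext_iff.mp h).1 hwne
          · exact h
  -- counting
  set V : Finset (Fin n) := univ.filter (fun u => (u, v₀) ∈ E) with hV
  set A : Finset (Fin n × Fin n) := E.filter (fun p => p.2 = v₀) with hA
  set B : Finset (Fin n × Fin n) := E.filter (fun p => p.1 ∈ V ∧ p.2 ≠ v₀) with hB
  set C : Finset (Fin n × Fin n) := E.filter (fun p => p.1 ∉ V) with hC
  have hVn : V.card ≤ n := (card_le_univ V).trans (by simp)
  have hAcard : A.card = V.card := by
    have : A = V.image (fun u => (u, v₀)) := by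
      ext p
      simp only [hA, hV, mem_filter, mem_image, mem_univ, true_and]
      constructor
      · rintro ⟨hp, h2⟩
        refine ⟨p.1, ?_, Prod.ext rfl h2.symm⟩
        rwa [← h2]
      · rintro ⟨u, hu, rfl⟩
        exact ⟨hu, rfl⟩
    rw [this, card_image_of_injective _ (fun x y h => (Prod.ext_iff.mp h).1)]
  have hBcard : 3 * (n - 1) ≤ B.card := by
    have hfib : B.card = ∑ v ∈ univ, (B.filter (fun p => p.2 = v)).card :=
      card_eq_sum_card_fiberwise (fun p _ => mem_univ p.2)
    have hstep : ∀ v ∈ univ.erase v₀, 3 ≤ (B.filter (fun p => p.2 = v)).card := by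
      intro v hv
      have hvne : v ≠ v₀ := ne_of_mem_erase hv
      obtain ⟨s, hs3, hsmem⟩ := key v hvne
      have hsub : s.image (fun u => (u, v)) ⊆ B.filter (fun p => p.2 = v) := by
        intro p hp
        simp only [mem_image] at hp
        obtain ⟨u, hu, rfl⟩ := hp
        obtain ⟨h1, h2⟩ := hsmem u hu
        exact mem_filter.mpr ⟨mem_filter.mpr ⟨h2, mem_filter.mpr ⟨mem_univ u, h1⟩, hvne⟩, rfl⟩
      calc 3 = (s.image (fun u => (u, v))).card := by
              rw [card_image_of_injective _ (fun x y h => (Prod.ext_iff.mp h).1), hs3]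
        _ ≤ _ := card_le_card hsub
    calc 3 * (n - 1) = ∑ _v ∈ univ.erase v₀, 3 := by
          rw [sum_const, card_erase_of_mem (mem_univ _), card_univ, Fintype.card_fin,
            smul_eq_mul, mul_comm]
      _ ≤ ∑ v ∈ univ.erase v₀, (B.filter (fun p => p.2 = v)).card :=
          sum_le_sum hstep
      _ ≤ ∑ v ∈ univ, (B.filter (fun p => p.2 = v)).card :=
          sum_le_sum_of_subset (erase_subset _ _)
      _ = B.card := hfib.symm
  have hCcard : n - V.card ≤ C.card := by
    have hfib : C.card = ∑ u ∈ univ, (C.filter (fun p => p.1 = u)).card :=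
      card_eq_sum_card_fiberwise (fun p _ => mem_univ p.1)
    have hstep : ∀ u ∈ univ \ V, 1 ≤ (C.filter (fun p => p.1 = u)).card := by
      intro u hu
      have huV : u ∉ V := (mem_sdiff.mp hu).2
      have : C.filter (fun p => p.1 = u) = E.filter (fun p => p.1 = u) := by
        ext p
        simp only [hC, mem_filter, and_assoc]
        constructor
        · rintro ⟨h1, _, h3⟩; exact ⟨h1, h3⟩
        · rintro ⟨h1, h3⟩; exact ⟨h1, by rw [h3]; exact huV, h3⟩
      rw [this]
      exact hU u
    calc n - V.card = ∑ _u ∈ univ \ V, 1 := by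
          rw [sum_const, card_sdiff_of_subset (subset_univ V), card_univ, Fintype.card_fin,
            smul_eq_mul, mul_one]
      _ ≤ ∑ u ∈ univ \ V, (C.filter (fun p => p.1 = u)).card := sum_le_sum hstep
      _ ≤ ∑ u ∈ univ, (C.filter (fun p => p.1 = u)).card :=
          sum_le_sum_of_subset (sdiff_subset)
      _ = C.card := hfib.symm
  have hdAB : Disjoint A B := by
    rw [disjoint_left]
    intro p hpA hpB
    simp only [hA, hB, mem_filter] at hpA hpB
    exact hpB.2.2 hpA.2
  have hdAC : Disjoint A C := by
    rw [disjoint_left]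
    intro p hpA hpC
    simp only [hA, hB, hC, hV, mem_filter, mem_univ, true_and] at hpA hpC
    refine hpC.2 ?_
    rw [← hpA.2]
    exact hpA.1
  have hdBC : Disjoint B C := by
    rw [disjoint_left]
    intro p hpB hpC
    simp only [hB, hC, mem_filter] at hpB hpC
    exact hpC.2 hpB.2.1
  have hsubE : A ∪ B ∪ C ⊆ E := by
    intro p hp
    rcases mem_union.mp hp with hp | hp
    · rcases mem_union.mp hp with hp | hp
      · exact (mem_filter.mp hp).1
      · exact (mem_filter.mp hp).1
    · exact (mem_filter.mp hp).1
  have hcardsum : A.card + B.card + C.card ≤ E.card := by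
    have h1 : (A ∪ B ∪ C).card = A.card + B.card + C.card := by
      rw [card_union_of_disjoint, card_union_of_disjoint hdAB]
      rw [disjoint_union_left]
      exact ⟨hdAC, hdBC⟩
    rw [← h1]
    exact card_le_card hsubE
  have hn : 1 ≤ n := u₀.pos
  omega

def swapE (n : ℕ) (E : Finset (Fin n × Fin n)) : Finset (Fin n × Fin n) :=
  E.map (Equiv.prodComm (Fin n) (Fin n)).toEmbedding

lemma mem_swapE (n : ℕ) (E : Finset (Fin n × Fin n)) (u v : Fin n) :
    (u, v) ∈ swapE n E ↔ (v, u) ∈ E := by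
  simp [swapE, Prod.ext_iff]

lemma containsK_swapE (n : ℕ) (E : Finset (Fin n × Fin n)) (a b : ℕ) :
    ContainsK n (swapE n E) a b ↔ ContainsK n E b a := by
  constructor
  · rintro ⟨S, T, hS, hT, h⟩
    exact ⟨T, S, hT, hS, fun v hv u hu => (mem_swapE n E u v).mp (h u hu v hv)⟩
  · rintro ⟨S, T, hS, hT, h⟩
    exact ⟨T, S, hT, hS, fun v hv u hu => (mem_swapE n E v u).mpr (h u hu v hv)⟩

lemma sat_swapE (n : ℕ) (E : Finset (Fin n × Fin n)) (hsat : SaturatedKst n E 2 4) :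
    SaturatedKst n (swapE n E) 2 4 := by
  constructor
  · rintro (h | h)
    · exact hsat.1 (Or.inr ((containsK_swapE n E 2 4).mp h))
    · exact hsat.1 (Or.inl ((containsK_swapE n E 4 2).mp h))
  · intro u v huv
    rw [mem_swapE] at huv
    have hins : insert (u, v) (swapE n E) = swapE n (insert (v, u) E) := by
      simp [swapE, Finset.map_insert]
    rcases hsat.2 v u huv with h | h
    · exact Or.inr (by rw [hins]; exact (containsK_swapE n _ 4 2).mpr h)
    · exact Or.inl (by rw [hins]; exact (containsK_swapE n _ 2 4).mpr h)

lemma degU_swapE (n : ℕ) (E : Finset (Fin n × Fin n)) (u : Fin n) :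
    degU n (swapE n E) u = degV n E u := by
  unfold degU degV swapE
  rw [Finset.filter_map]
  rw [Finset.card_map]
  rfl

lemma card_swapE (n : ℕ) (E : Finset (Fin n × Fin n)) :
    (swapE n E).card = E.card := Finset.card_map _

/-- a `K_{2,4}`-saturated `n` by `n` bipartite graph of minimum
degree exactly 1 has at least `4n - 3` edges, for all sufficiently large `n`. -/
theorem stmt16 :
    ∃ N : ℕ, ∀ n : ℕ, N ≤ n →
      ∀ E : Finset (Fin n × Fin n), SaturatedKst n E 2 4 →
        (∀ u : Fin n, 1 ≤ degU n E u) →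
        (∀ v : Fin n, 1 ≤ degV n E v) →
        ((∃ u : Fin n, degU n E u = 1) ∨ (∃ v : Fin n, degV n E v = 1)) →
        4 * n - 3 ≤ E.card := by
  refine ⟨1, fun n _ E hsat hU hV hmin => ?_⟩
  rcases hmin with ⟨u₀, hu₀⟩ | ⟨v₀, hv₀⟩
  · exact mainU n E hsat hU u₀ hu₀
  · have := mainU n (swapE n E) (sat_swapE n E hsat)
      (fun u => by rw [degU_swapE]; exact hV u) v₀ (by rw [degU_swapE]; exact hv₀)
    rwa [card_swapE] at this
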